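/- Fix x > 0. The function g_+(t) = (x+γ)t - ln Γ(1-t) on (0,1) attains a strictly positive maximum at t_+ = 1 - ψ^{-1}(-x-γ). -/

import Mathlib

/-!
As the derivative of the convex function `log Γ`, `ψ` is nondecreasing, and the functional
equation `ψ (y + 1) = ψ y + 1 / y` upgrades this to strict monotonicity, so `log Γ` is strictly
convex. Since `ψ 1 = -γ` and `ψ y ≤ 1 - γ - 1 / y` on `(0, 1]`, Darboux's theorem gives a unique
`u ∈ (0, 1)` with `ψ u = -x - γ`, i.e. `t₊ = 1 - u`. With `s = 1 - t`, the difference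
`g₊ t₊ - g₊ t` is exactly the gap between `log Γ s` and the tangent line of `log Γ` at `u`:
nonnegative by convexity, and strictly positive at `t = 0` (where `s = 1 ≠ u` and `g₊ 0 = 0`).
-/

noncomputable def digamma (x : ℝ) : ℝ := deriv (fun y => Real.log (Real.Gamma y)) x

open Real Set Topology

theorem StrictConvexOn.add_mul_sub_lt {S : Set ℝ} {f : ℝ → ℝ} {x y f' : ℝ}
    (hf : StrictConvexOn ℝ S f) (hx : x ∈ S) (hy : y ∈ S) (hxy : x ≠ y)
    (hf' : HasDerivAt f f' x) : f x + f' * (y - x) < f y := by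
  rcases hxy.lt_or_gt with h | h
  · have hslope := hf.lt_slope_of_hasDerivAt hx hy h hf'
    rw [slope_def_field, lt_div_iff₀ (sub_pos.2 h)] at hslope
    linarith
  · have hslope := hf.slope_lt_of_hasDerivAt hy hx h hf'
    rw [slope_def_field, div_lt_iff₀ (sub_pos.2 h)] at hslope
    linarith

theorem ConvexOn.add_mul_sub_le {S : Set ℝ} {f : ℝ → ℝ} {x y f' : ℝ}
    (hf : ConvexOn ℝ S f) (hx : x ∈ S) (hy : y ∈ S)
    (hf' : HasDerivAt f f' x) : f x + f' * (y - x) ≤ f y := by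
  rcases lt_trichotomy x y with h | rfl | h
  · have hslope := hf.le_slope_of_hasDerivAt hx hy h hf'
    rw [slope_def_field, le_div_iff₀ (sub_pos.2 h)] at hslope
    linarith
  · simp
  · have hslope := hf.slope_le_of_hasDerivAt hy hx h hf'
    rw [slope_def_field, div_le_iff₀ (sub_pos.2 h)] at hslope
    linarith

theorem differentiableAt_log_Gamma {y : ℝ} (hy : 0 < y) :
    DifferentiableAt ℝ (fun z => log (Gamma z)) y :=
  (differentiableAt_Gamma fun m => by linarith [(Nat.cast_nonneg m : (0 : ℝ) ≤ m)]).log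
    (Gamma_pos_of_pos hy).ne'

theorem hasDerivAt_log_Gamma {y : ℝ} (hy : 0 < y) :
    HasDerivAt (fun z => log (Gamma z)) (digamma y) y :=
  (differentiableAt_log_Gamma hy).hasDerivAt

theorem digamma_one : digamma 1 = -eulerMascheroniConstant := by
  simpa [digamma, Gamma_one] using (hasDerivAt_Gamma_one.log (by simp [Gamma_one])).deriv

theorem digamma_add_one {y : ℝ} (hy : 0 < y) : digamma (y + 1) = digamma y + y⁻¹ := by
  have hshift : HasDerivAt (fun z => log (Gamma (z + 1))) (digamma (y + 1)) y := by
    simpa [Function.comp_def] using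
      (hasDerivAt_log_Gamma (by linarith : 0 < y + 1)).comp y ((hasDerivAt_id y).add_const 1)
  have hrec : (fun z => log (Gamma (z + 1))) =ᶠ[𝓝 y] fun z => log (Gamma z) + log z := by
    filter_upwards [eventually_gt_nhds hy] with z hz
    rw [Gamma_add_one hz.ne', log_mul hz.ne' (Gamma_pos_of_pos hz).ne', add_comm]
  exact hshift.unique ((hasDerivAt_log_Gamma hy).add (hasDerivAt_log hy.ne')
    |>.congr_of_eventuallyEq hrec)

theorem digamma_monotoneOn : MonotoneOn digamma (Ioi 0) :=
  convexOn_log_Gamma.monotoneOn_deriv fun _ hy => differentiableAt_log_Gamma hy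

theorem digamma_strictMonoOn : StrictMonoOn digamma (Ioi 0) := by
  intro a (ha : 0 < a) b (hb : 0 < b) hab
  refine (digamma_monotoneOn ha hb hab.le).lt_of_ne fun heq => ?_
  have hshift := digamma_monotoneOn (mem_Ioi.2 (by linarith : 0 < a + 1))
    (mem_Ioi.2 (by linarith : 0 < b + 1)) (by linarith)
  rw [digamma_add_one ha, digamma_add_one hb, heq] at hshift
  linarith [inv_strictAnti₀ ha hab]

theorem strictConvexOn_log_Gamma : StrictConvexOn ℝ (Ioi 0) fun y => log (Gamma y) :=
  StrictMonoOn.strictConvexOn_of_deriv (convex_Ioi 0)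
    (fun y hy => (differentiableAt_log_Gamma hy).continuousAt.continuousWithinAt)
    (by rw [interior_Ioi]; exact digamma_strictMonoOn)

theorem digamma_le_of_le_one {y : ℝ} (hy : 0 < y) (hy1 : y ≤ 1) :
    digamma y ≤ 1 - eulerMascheroniConstant - y⁻¹ := by
  have hmono := digamma_monotoneOn (mem_Ioi.2 (by linarith : 0 < y + 1))
    (by norm_num : (2 : ℝ) ∈ Ioi 0) (by linarith)
  rw [digamma_add_one hy, show (2 : ℝ) = 1 + 1 by norm_num, digamma_add_one one_pos,
    digamma_one, inv_one] at hmono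
  linarith

theorem exists_digamma_eq_of_lt {v : ℝ} (hv : v < -eulerMascheroniConstant) :
    ∃ u ∈ Ioo 0 1, digamma u = v := by
  set ε := (2 - eulerMascheroniConstant - v)⁻¹ with hε
  have hε0 : 0 < ε := inv_pos.2 (by linarith)
  have hε1 : ε < 1 := inv_lt_one_of_one_lt₀ (by linarith)
  have hψε : digamma ε < v := by
    have := digamma_le_of_le_one hε0 hε1.le
    rw [hε, inv_inv] at this
    linarith
  have hψ1 : v < digamma 1 := digamma_one ▸ hv
  obtain ⟨u, hu, hψu⟩ := exists_hasDerivWithinAt_eq_of_gt_of_lt hε1.le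
    (fun y hy => (hasDerivAt_log_Gamma (hε0.trans_le hy.1)).hasDerivWithinAt) hψε hψ1
  exact ⟨u, ⟨hε0.trans hu.1, hu.2⟩, hψu⟩

theorem gPlus_max (x : ℝ) (hx : 0 < x) :
    letI γ := Real.eulerMascheroniConstant
    letI tPlus := 1 - Function.invFunOn digamma (Set.Ioi 0) (-x - γ)
    letI g := fun t : ℝ => (x + γ) * t - Real.log (Real.Gamma (1 - t))
    tPlus ∈ Set.Ioo (0:ℝ) 1 ∧ 0 < g tPlus ∧ ∀ t ∈ Set.Ioo (0:ℝ) 1, g t ≤ g tPlus := by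
  obtain ⟨u, hu, hψu⟩ := exists_digamma_eq_of_lt (v := -x - eulerMascheroniConstant)
    (by linarith)
  have htPlus : Function.invFunOn digamma (Ioi 0) (-x - eulerMascheroniConstant) = u := by
    rw [← hψu, digamma_strictMonoOn.injOn.leftInvOn_invFunOn hu.1]
  have hslope : x + eulerMascheroniConstant = -digamma u := by rw [hψu]; ring
  simp only [htPlus, hslope, sub_sub_cancel]
  refine ⟨⟨by linarith [hu.2], by linarith [hu.1]⟩, ?_, fun t ht => ?_⟩
  · have htangent := strictConvexOn_log_Gamma.add_mul_sub_lt hu.1 (mem_Ioi.2 one_pos)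
      hu.2.ne (hasDerivAt_log_Gamma hu.1)
    simp only [Gamma_one, log_one] at htangent
    linarith
  · have htangent := strictConvexOn_log_Gamma.convexOn.add_mul_sub_le hu.1
      (mem_Ioi.2 (sub_pos.2 ht.2)) (hasDerivAt_log_Gamma hu.1)
    linarith
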